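/- Let N₁, N₂, N₃, N₄ be natural numbers and set N = N₁ + N₂ + N₃ + N₄. Assume either N ≥ 5, or N = 4 and N₂ ≤ 3. Then there exists a unique x ∈ (√2, ∞) such that N₁·ω₁(x) + N₂·ω₂(x) + N₃·ω₃(x) + N₄·ω₄(x) = 2π. -/

import Mathlib

open Real

noncomputable section

/-- Apex angle of an elementary decorated triangle of type 1 (Euclidean case,
`ř = 1`, `ě = 1/4`) with apex edge length `x`. -/
def ω₁ (x : ℝ) : ℝ := 2 * Real.arcsin (5 / (4 * x))

/-- Apex angle of an elementary decorated triangle of type 2. -/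
def ω₂ (x : ℝ) : ℝ := 2 * Real.arcsin (1 / x)

/-- Apex angle of an elementary decorated triangle of type 3. -/
def ω₃ (x : ℝ) : ℝ := 2 * Real.arcsin (1 / Real.sqrt (x ^ 2 - 1))

/-- Apex angle of an elementary decorated triangle of type 4. -/
def ω₄ (x : ℝ) : ℝ := Real.arccos ((2 * x ^ 2 - 5) / (2 * x * Real.sqrt (x ^ 2 - 1)))

/-!
Write `F x = ∑ Nₘ ωₘ x`. Each `ωₘ` is continuous and strictly decreasing on `[√2, ∞)` and tends
to `0` at infinity, so `F = 2π` has at most one solution there, and one exists as soon as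
`2π < F √2`. At `√2` we have `ω₂ = π / 2`, `ω₃ = π` and `ω₁, ω₄ > π / 2`, hence
`F √2 ≥ N π / 2 ≥ 2π`, with equality only when all four triangles are of type 2.
-/

open Set Filter Topology

theorem existsUnique_mem_Ioi_eq_of_strictAntiOn {α β : Type*}
    [ConditionallyCompleteLinearOrder α] [TopologicalSpace α] [OrderTopology α]
    [DenselyOrdered α] [LinearOrder β] [TopologicalSpace β] [OrderClosedTopology β]
    {f : α → β} {a : α} {l c : β} (hcont : ContinuousOn f (Ici a))
    (hanti : StrictAntiOn f (Ici a)) (hlim : Tendsto f atTop (𝓝 l)) (hlc : l < c)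
    (hca : c < f a) : ∃! x, x ∈ Ioi a ∧ f x = c := by
  obtain ⟨b, hfb, hab⟩ := ((hlim.eventually_lt_const hlc).and (eventually_ge_atTop a)).exists
  obtain ⟨x, ⟨hax, -⟩, hfx⟩ :=
    intermediate_value_Icc' hab (hcont.mono Icc_subset_Ici_self) ⟨hfb.le, hca.le⟩
  have hax : a < x := hax.lt_of_ne (by rintro rfl; exact hca.ne' hfx)
  refine ⟨x, ⟨hax, hfx⟩, fun y ⟨hay, hfy⟩ => ?_⟩
  exact hanti.injOn (mem_Ici.2 hay.le) (mem_Ici.2 hax.le) (hfy.trans hfx.symm)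

theorem Finset.strictAntiOn_sum_mul {ι α : Type*} [Preorder α] {s : Set α} (t : Finset ι)
    {c : ι → ℝ} {f : ι → α → ℝ} (hc : ∀ i ∈ t, 0 ≤ c i) (hpos : 0 < ∑ i ∈ t, c i)
    (hf : ∀ i ∈ t, StrictAntiOn (f i) s) : StrictAntiOn (fun x => ∑ i ∈ t, c i * f i x) s := by
  intro a ha b hb hab
  obtain ⟨j, hj, hcj⟩ := Finset.exists_lt_of_sum_lt (f := fun _ => (0 : ℝ))
    (by simpa using hpos)
  refine Finset.sum_lt_sum (fun i hi => ?_) ⟨j, hj, ?_⟩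
  · exact mul_le_mul_of_nonneg_left (hf i hi ha hb hab).le (hc i hi)
  · exact mul_lt_mul_of_pos_left (hf j hj ha hb hab) hcj

theorem one_div_mem_Icc {x : ℝ} (hx : 1 ≤ x) : 1 / x ∈ Icc (-1) 1 :=
  ⟨by linarith [one_div_pos.2 (zero_lt_one.trans_le hx)], (div_le_one (by linarith)).2 hx⟩

theorem strictAntiOn_two_mul_arcsin_comp {α : Type*} [Preorder α] {s : Set α} {u : α → ℝ}
    (hu : StrictAntiOn u s) (hmaps : MapsTo u s (Icc (-1) 1)) :
    StrictAntiOn (fun x => 2 * Real.arcsin (u x)) s :=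
  fun _ ha _ hb hab => by
    have := Real.strictMonoOn_arcsin (hmaps hb) (hmaps ha) (hu ha hb hab)
    linarith

theorem tendsto_two_mul_arcsin_zero {α : Type*} {l : Filter α} {u : α → ℝ}
    (hu : Tendsto u l (𝓝 0)) : Tendsto (fun x => 2 * Real.arcsin (u x)) l (𝓝 0) := by
  simpa using ((Real.continuous_arcsin.tendsto 0).comp hu).const_mul 2

theorem two_le_sq_of_sqrt_two_le {x : ℝ} (hx : √2 ≤ x) : 2 ≤ x ^ 2 :=
  (Real.sqrt_le_iff.1 hx).2

theorem sqrt_sq_sub_one_pos {x : ℝ} (hx : 1 < x) : 0 < √(x ^ 2 - 1) :=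
  Real.sqrt_pos.2 (by nlinarith)

theorem one_le_sqrt_sq_sub_one {x : ℝ} (hx : √2 ≤ x) : 1 ≤ √(x ^ 2 - 1) :=
  (Real.le_sqrt' one_pos).2 (by linarith [two_le_sq_of_sqrt_two_le hx])

theorem five_div_four_mul_mem_Icc {x : ℝ} (hx : √2 ≤ x) : 5 / (4 * x) ∈ Icc (-1) 1 := by
  have : 5 / 4 < x := ((Real.lt_sqrt (by norm_num)).2 (by norm_num)).trans_le hx
  exact ⟨by linarith [div_pos (by norm_num : (0:ℝ) < 5) (by linarith : (0:ℝ) < 4 * x)],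
    (div_le_one (by linarith)).2 (by linarith)⟩

theorem continuousOn_ω₁ : ContinuousOn ω₁ (Ioi 0) :=
  continuousOn_const.mul <| Real.continuous_arcsin.comp_continuousOn <|
    continuousOn_const.div (continuousOn_const.mul continuousOn_id) fun _ hx =>
      (mul_pos four_pos hx).ne'

theorem strictAntiOn_ω₁ : StrictAntiOn ω₁ (Ici √2) := by
  refine strictAntiOn_two_mul_arcsin_comp (fun a ha b _ hab => ?_)
    fun _ => five_div_four_mul_mem_Icc
  have : 0 < a := (Real.sqrt_pos.2 two_pos).trans_le ha
  exact div_lt_div_of_pos_left (by norm_num) (by positivity) (by linarith)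

theorem tendsto_ω₁_atTop : Tendsto ω₁ atTop (𝓝 0) :=
  tendsto_two_mul_arcsin_zero <| tendsto_const_nhds.div_atTop (tendsto_id.const_mul_atTop four_pos)

theorem continuousOn_ω₂ : ContinuousOn ω₂ (Ioi 0) :=
  continuousOn_const.mul <| Real.continuous_arcsin.comp_continuousOn <|
    continuousOn_const.div continuousOn_id fun _ hx => ne_of_gt hx

theorem strictAntiOn_ω₂ : StrictAntiOn ω₂ (Ici √2) :=
  strictAntiOn_two_mul_arcsin_comp
    (fun _ ha _ _ hab => one_div_lt_one_div_of_lt ((Real.sqrt_pos.2 two_pos).trans_le ha) hab)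
    fun _ hx => one_div_mem_Icc (Real.one_lt_sqrt_two.le.trans hx)

theorem tendsto_ω₂_atTop : Tendsto ω₂ atTop (𝓝 0) :=
  tendsto_two_mul_arcsin_zero <| tendsto_const_nhds.div_atTop tendsto_id

theorem ω₂_sqrt_two : ω₂ √2 = π / 2 := by
  rw [ω₂, ← Real.sqrt_div_self', ← Real.sin_pi_div_four,
    Real.arcsin_sin (by linarith [pi_pos]) (by linarith [pi_pos])]
  ring

theorem pi_div_two_lt_ω₁_sqrt_two : π / 2 < ω₁ √2 := by
  have h2 : (0 : ℝ) < √2 := Real.sqrt_pos.2 two_pos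
  have := Real.strictMonoOn_arcsin (one_div_mem_Icc Real.one_lt_sqrt_two.le)
    (five_div_four_mul_mem_Icc le_rfl)
    (by rw [← div_div]; exact div_lt_div_of_pos_right (by norm_num) h2)
  rw [← ω₂_sqrt_two]
  unfold ω₁ ω₂
  linarith

theorem continuousOn_ω₃ : ContinuousOn ω₃ (Ioi 1) :=
  continuousOn_const.mul <| Real.continuous_arcsin.comp_continuousOn <|
    continuousOn_const.div (by fun_prop) fun _ hx => (sqrt_sq_sub_one_pos hx).ne'

theorem strictAntiOn_ω₃ : StrictAntiOn ω₃ (Ici √2) := by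
  refine strictAntiOn_two_mul_arcsin_comp (fun a ha b _ hab => ?_)
    fun _ hx => one_div_mem_Icc (one_le_sqrt_sq_sub_one hx)
  have ha0 : 0 ≤ a := (Real.sqrt_nonneg 2).trans ha
  refine one_div_lt_one_div_of_lt (zero_lt_one.trans_le (one_le_sqrt_sq_sub_one ha)) ?_
  exact Real.sqrt_lt_sqrt (by linarith [two_le_sq_of_sqrt_two_le ha]) (by gcongr)

theorem tendsto_ω₃_atTop : Tendsto ω₃ atTop (𝓝 0) :=
  tendsto_two_mul_arcsin_zero <| tendsto_const_nhds.div_atTop <| Real.tendsto_sqrt_atTop.comp <|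
    tendsto_atTop_add_const_right _ (-1) (tendsto_pow_atTop two_ne_zero)

theorem ω₃_sqrt_two : ω₃ √2 = π := by
  norm_num [ω₃]
  ring

theorem continuousOn_ω₄ : ContinuousOn ω₄ (Ioi 1) :=
  Real.continuous_arccos.comp_continuousOn <| ContinuousOn.div (by fun_prop) (by fun_prop)
    fun x hx => by have := sqrt_sq_sub_one_pos hx; have : 0 < x := zero_lt_one.trans hx; positivity

def cosω₄ (x : ℝ) : ℝ := (2 * x ^ 2 - 5) / (2 * x * √(x ^ 2 - 1))

/-- Both summands increase with `x`, which makes `ω₄` decreasing. -/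
theorem cosω₄_eq {x : ℝ} (hx : 1 < x) :
    cosω₄ x = √(x ^ 2 - 1) / x - 3 / (2 * (x * √(x ^ 2 - 1))) := by
  have hs := sqrt_sq_sub_one_pos hx
  have hs2 := Real.sq_sqrt (by nlinarith : (0:ℝ) ≤ x ^ 2 - 1)
  have : x ≠ 0 := by positivity
  rw [cosω₄]
  field_simp
  linear_combination -2 * hs2

theorem strictMonoOn_sqrt_sq_sub_one_div_self :
    StrictMonoOn (fun x => √(x ^ 2 - 1) / x) (Ioi 1) := by
  intro a (ha : 1 < a) b (hb : 1 < b) hab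
  have hsa := Real.sq_sqrt (by nlinarith : (0:ℝ) ≤ a ^ 2 - 1)
  have hsb := Real.sq_sqrt (by nlinarith : (0:ℝ) ≤ b ^ 2 - 1)
  have := sqrt_sq_sub_one_pos ha
  have := sqrt_sq_sub_one_pos hb
  rw [div_lt_div_iff₀ (by positivity) (by positivity)]
  refine lt_of_pow_lt_pow_left₀ 2 (by positivity) ?_
  rw [mul_pow, mul_pow, hsa, hsb]
  nlinarith

theorem strictMonoOn_mul_sqrt_sq_sub_one : StrictMonoOn (fun x => x * √(x ^ 2 - 1)) (Ioi 1) :=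
  fun a (ha : 1 < a) b _ hab => mul_lt_mul'' hab
    (Real.sqrt_lt_sqrt (by nlinarith) (by gcongr)) (by linarith)
    (sqrt_sq_sub_one_pos ha).le

theorem strictMonoOn_cosω₄ : StrictMonoOn cosω₄ (Ioi 1) := by
  intro a (ha : 1 < a) b (hb : 1 < b) hab
  have hpos : 0 < a * √(a ^ 2 - 1) := mul_pos (by linarith) (sqrt_sq_sub_one_pos ha)
  have h₁ := strictMonoOn_sqrt_sq_sub_one_div_self ha hb hab
  have h₂ := strictMonoOn_mul_sqrt_sq_sub_one ha hb hab
  have h₃ : 3 / (2 * (b * √(b ^ 2 - 1))) < 3 / (2 * (a * √(a ^ 2 - 1))) :=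
    div_lt_div_of_pos_left three_pos (by positivity) (by simpa using h₂)
  rw [cosω₄_eq ha, cosω₄_eq hb]
  simp only at h₁
  linarith

theorem cosω₄_le_one {x : ℝ} (hx : 1 < x) : cosω₄ x ≤ 1 := by
  have hs := sqrt_sq_sub_one_pos hx
  have hsx : √(x ^ 2 - 1) / x ≤ 1 :=
    (div_le_one (by linarith)).2 ((Real.sqrt_le_left (by linarith)).2 (by linarith))
  rw [cosω₄_eq hx]
  linarith [div_pos three_pos (by positivity : 0 < 2 * (x * √(x ^ 2 - 1)))]

theorem cosω₄_sqrt_two : cosω₄ √2 = -(1 / (2 * √2)) := by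
  norm_num [cosω₄]
  ring

theorem mapsTo_cosω₄ : MapsTo cosω₄ (Ici √2) (Icc (-1) 1) := by
  intro x (hx : √2 ≤ x)
  have h2 : (1:ℝ) < √2 := Real.one_lt_sqrt_two
  refine ⟨?_, cosω₄_le_one (h2.trans_le hx)⟩
  calc -1 ≤ -(1 / (2 * √2)) := by rw [neg_le_neg_iff, div_le_one (by positivity)]; linarith
    _ = cosω₄ √2 := cosω₄_sqrt_two.symm
    _ ≤ cosω₄ x := strictMonoOn_cosω₄.monotoneOn h2 (h2.trans_le hx) hx

theorem strictAntiOn_ω₄ : StrictAntiOn ω₄ (Ici √2) :=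
  Real.strictAntiOn_arccos.comp_strictMonoOn
    (strictMonoOn_cosω₄.mono (Ici_subset_Ioi.2 Real.one_lt_sqrt_two)) mapsTo_cosω₄

theorem pi_div_two_lt_ω₄_sqrt_two : π / 2 < ω₄ √2 := by
  show π / 2 < Real.arccos (cosω₄ √2)
  rw [cosω₄_sqrt_two, ← not_le, Real.arccos_le_pi_div_two, not_le, neg_lt_zero]
  positivity

theorem tendsto_cosω₄_atTop : Tendsto cosω₄ atTop (𝓝 1) := by
  have hlow : Tendsto (fun x : ℝ => 1 - 5 / (2 * x ^ 2)) atTop (𝓝 1) := by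
    simpa using tendsto_const_nhds.sub <| tendsto_const_nhds.div_atTop <|
      (tendsto_pow_atTop two_ne_zero).const_mul_atTop (by norm_num : (0:ℝ) < 2)
  refine tendsto_of_tendsto_of_tendsto_of_le_of_le' hlow tendsto_const_nhds ?_ ?_
  · filter_upwards [eventually_ge_atTop 2] with x hx
    have hs := sqrt_sq_sub_one_pos (by linarith : 1 < x)
    have hsx : √(x ^ 2 - 1) ≤ x := (Real.sqrt_le_left (by linarith)).2 (by linarith)
    calc 1 - 5 / (2 * x ^ 2) = (2 * x ^ 2 - 5) / (2 * x * x) := by field_simp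
      _ ≤ cosω₄ x := div_le_div_of_nonneg_left (by nlinarith) (by positivity) (by gcongr)
  · filter_upwards [eventually_gt_atTop 1] with x hx using cosω₄_le_one hx

theorem tendsto_ω₄_atTop : Tendsto ω₄ atTop (𝓝 0) := by
  have h := (Real.continuous_arccos.tendsto 1).comp tendsto_cosω₄_atTop
  rwa [Real.arccos_one] at h

theorem two_pi_lt_sum_ω_sqrt_two (N₁ N₂ N₃ N₄ : ℕ)
    (h : 5 ≤ N₁ + N₂ + N₃ + N₄ ∨ (N₁ + N₂ + N₃ + N₄ = 4 ∧ N₂ ≤ 3)) :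
    2 * π < N₁ * ω₁ √2 + N₂ * ω₂ √2 + N₃ * ω₃ √2 + N₄ * ω₄ √2 := by
  have h₁ := sub_pos.2 pi_div_two_lt_ω₁_sqrt_two
  have h₄ := sub_pos.2 pi_div_two_lt_ω₄_sqrt_two
  have hπ := half_pos pi_pos
  have hsplit : N₁ * ω₁ √2 + N₂ * ω₂ √2 + N₃ * ω₃ √2 + N₄ * ω₄ √2 =
      (N₁ + N₂ + N₃ + N₄ : ℕ) * (π / 2) +
        (N₁ * (ω₁ √2 - π / 2) + N₃ * (π / 2) + N₄ * (ω₄ √2 - π / 2)) := by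
    rw [ω₂_sqrt_two, ω₃_sqrt_two]; push_cast; ring
  rw [hsplit]
  rcases h with h | ⟨h, h₂⟩
  · have : (5 : ℝ) ≤ (N₁ + N₂ + N₃ + N₄ : ℕ) := by exact_mod_cast h
    nlinarith [mul_nonneg (Nat.cast_nonneg N₁) h₁.le, mul_nonneg (Nat.cast_nonneg N₃) hπ.le,
      mul_nonneg (Nat.cast_nonneg N₄) h₄.le]
  · rw [h]
    have : 0 < N₁ * (ω₁ √2 - π / 2) + N₃ * (π / 2) + N₄ * (ω₄ √2 - π / 2) := by
      rcases (by omega : 0 < N₁ ∨ 0 < N₃ ∨ 0 < N₄) with hi | hi | hi <;>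
      positivity
    push_cast
    linarith

/-- If `N = N₁ + N₂ + N₃ + N₄` elementary decorated triangles of the
four types (with `N ≥ 5`, or `N = 4` and not all of type 2) are glued around a common
apex, there is a unique apex edge length `x ∈ (√2, ∞)` for which the total cone angle
at the apex equals `2π`, so that the resulting decorated `N`-gon is realizable in the
Euclidean plane. -/
theorem exists_unique_apex_parameter
    (N₁ N₂ N₃ N₄ : ℕ)
    (h : 5 ≤ N₁ + N₂ + N₃ + N₄ ∨ (N₁ + N₂ + N₃ + N₄ = 4 ∧ N₂ ≤ 3)) :
    ∃! x : ℝ, x ∈ Set.Ioi (Real.sqrt 2) ∧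
      (N₁ : ℝ) * ω₁ x + (N₂ : ℝ) * ω₂ x + (N₃ : ℝ) * ω₃ x + (N₄ : ℝ) * ω₄ x
        = 2 * π := by
  have hpos : (0 : ℝ) < N₁ + N₂ + N₃ + N₄ := by
    exact_mod_cast (by omega : 0 < N₁ + N₂ + N₃ + N₄)
  have h₀ : Ici √2 ⊆ Ioi 0 := Ici_subset_Ioi.2 (Real.sqrt_pos.2 two_pos)
  have h₁ : Ici √2 ⊆ Ioi 1 := Ici_subset_Ioi.2 Real.one_lt_sqrt_two
  refine existsUnique_mem_Ioi_eq_of_strictAntiOn ?_ ?_ ?_ two_pi_pos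
    (two_pi_lt_sum_ω_sqrt_two N₁ N₂ N₃ N₄ h)
  · exact (((continuousOn_const.mul (continuousOn_ω₁.mono h₀)).add
      (continuousOn_const.mul (continuousOn_ω₂.mono h₀))).add
      (continuousOn_const.mul (continuousOn_ω₃.mono h₁))).add
      (continuousOn_const.mul (continuousOn_ω₄.mono h₁))
  · have := Finset.univ.strictAntiOn_sum_mul (s := Ici √2) (c := ![(N₁ : ℝ), N₂, N₃, N₄])
      (f := ![ω₁, ω₂, ω₃, ω₄]) (by simp [Fin.forall_fin_succ]) (by simpa [Fin.sum_univ_four])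
      (by simp [Fin.forall_fin_succ, strictAntiOn_ω₁, strictAntiOn_ω₂, strictAntiOn_ω₃,
        strictAntiOn_ω₄])
    simpa [Fin.sum_univ_four] using this
  · simpa using (((tendsto_ω₁_atTop.const_mul (N₁ : ℝ)).add
      (tendsto_ω₂_atTop.const_mul (N₂ : ℝ))).add (tendsto_ω₃_atTop.const_mul (N₃ : ℝ))).add
      (tendsto_ω₄_atTop.const_mul (N₄ : ℝ))
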